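/- arXiv:1204.1779 — 4 statements merged into one kernel-verified Lean document; each statement's English description precedes it below -/
import Mathlib

section
/- Let k ≥ 1. For all real numbers x1,…,x_{3k+1}: 2ᵏ·C(3k,k)·(∑_{i=1}^{3k+1} xᵢ²)² = ∑(x_{i₁} ± x_{i₂} ± ⋯ ± x_{i_{k+1}})⁴, where the sum is over all (k+1)-element subsets {i₁<i₂<⋯<i_{k+1}} of {1,…,3k+1} and all 2ᵏ sign combinations with the sign of x_{i₁} fixed positive. -/
/-!
For a fixed `(k+1)`-set `A`, summing over the sign patterns kills every monomial with an odd
exponent, so the inner sum is `2^k (3 (∑_A x²)² - 2 ∑_A x⁴)`. Summed over all `A`, each `x_i⁴` is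
counted `C(3k,k)` times and each `x_i² x_j²` with `i ≠ j` counted `C(3k-1,k-1)` times; since
`C(3k,k) = 3 C(3k-1,k-1)`, the `x⁴` terms recombine into exactly `C(3k,k) (∑ x²)²`.
-/

open Finset

noncomputable def sgn (b : Bool) : ℝ := if b then 1 else -1

section Counting

variable {ι : Type*} [DecidableEq ι]

theorem sq_sum_eq_sum_sq_add_sum_offDiag {R : Type*} [CommSemiring R] (s : Finset ι)
    (y : ι → R) :
    (∑ i ∈ s, y i) ^ 2 = ∑ i ∈ s, y i ^ 2 + ∑ p ∈ s.offDiag, y p.1 * y p.2 := by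
  rw [sq, sum_mul_sum, ← sum_product', ← diag_union_offDiag, sum_union (disjoint_diag_offDiag _),
    sum_diag]
  simp only [sq]

variable {M : Type*} [AddCommMonoid M]

theorem sum_powersetCard_sum (s : Finset ι) (r : ℕ) (f : ι → M) :
    ∑ A ∈ s.powersetCard (r + 1), ∑ i ∈ A, f i = (#s - 1).choose r • ∑ i ∈ s, f i := by
  rw [sum_comm' (t' := s) (s' := fun i => {A ∈ s.powersetCard (r + 1) | {i} ⊆ A})]
  · rw [smul_sum]
    refine sum_congr rfl fun i hi => ?_
    rw [sum_const, card_filter_powersetCard_subset _ _ _ (singleton_subset_iff.2 hi) (by simp),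
      card_singleton, Nat.add_sub_cancel]
  · intro A i
    simp only [mem_filter, mem_powersetCard, singleton_subset_iff]
    exact ⟨fun ⟨⟨hA, hr⟩, hi⟩ => ⟨⟨⟨hA, hr⟩, hi⟩, hA hi⟩, fun ⟨⟨⟨hA, hr⟩, hi⟩, _⟩ => ⟨⟨hA, hr⟩, hi⟩⟩

theorem sum_powersetCard_sum_offDiag (s : Finset ι) (r : ℕ) (g : ι × ι → M) :
    ∑ A ∈ s.powersetCard (r + 2), ∑ p ∈ A.offDiag, g p =
      (#s - 2).choose r • ∑ p ∈ s.offDiag, g p := by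
  rw [sum_comm' (t' := s.offDiag)
    (s' := fun p => {A ∈ s.powersetCard (r + 2) | {p.1, p.2} ⊆ A})]
  · rw [smul_sum]
    refine sum_congr rfl fun p hp => ?_
    obtain ⟨h1, h2, hne⟩ := mem_offDiag.1 hp
    rw [sum_const, card_filter_powersetCard_subset _ _ _ (by simp [insert_subset_iff, h1, h2])
      (by simp [card_pair hne]), card_pair hne, Nat.add_sub_cancel]
  · intro A p
    simp only [mem_filter, mem_powersetCard, mem_offDiag, insert_subset_iff,
      singleton_subset_iff]
    constructor
    · rintro ⟨⟨hA, hr⟩, h1, h2, hne⟩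
      exact ⟨⟨⟨hA, hr⟩, h1, h2⟩, hA h1, hA h2, hne⟩
    · rintro ⟨⟨⟨hA, hr⟩, h1, h2⟩, -, -, hne⟩
      exact ⟨⟨hA, hr⟩, h1, h2, hne⟩

theorem sum_powersetCard_sq_sum {R : Type*} [CommRing R] (s : Finset ι) (r : ℕ) (y : ι → R) :
    ∑ A ∈ s.powersetCard (r + 2), (∑ i ∈ A, y i) ^ 2 =
      (#s - 1).choose (r + 1) • ∑ i ∈ s, y i ^ 2 +
        (#s - 2).choose r • ((∑ i ∈ s, y i) ^ 2 - ∑ i ∈ s, y i ^ 2) := by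
  simp only [sq_sum_eq_sum_sq_add_sum_offDiag _ y, add_sub_cancel_left, sum_add_distrib,
    sum_powersetCard_sum, sum_powersetCard_sum_offDiag]

end Counting

theorem sum_sgn_mul_eq_sub {ι : Type*} (A : Finset ι) (ε : ι → Bool) (x : ι → ℝ) :
    ∑ j ∈ A, sgn (ε j) * x j = ∑ j ∈ A, x j - 2 * ∑ j ∈ A with ε j = false, x j := by
  rw [sum_filter, mul_sum, ← sum_sub_distrib]
  refine sum_congr rfl fun j _ => ?_
  cases ε j <;> simp [sgn]; ring

section Signs

variable {ι : Type*} [DecidableEq ι]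

theorem sum_powerset_pow_four {R : Type*} [CommRing R] (x : ι → R) (B : Finset ι) (u : R) :
    ∑ T ∈ B.powerset, (u + ∑ j ∈ B, x j - 2 * ∑ j ∈ T, x j) ^ 4 =
      2 ^ #B * (u ^ 4 + 6 * u ^ 2 * ∑ j ∈ B, x j ^ 2 + 3 * (∑ j ∈ B, x j ^ 2) ^ 2 -
        2 * ∑ j ∈ B, x j ^ 4) := by
  induction B using Finset.induction_on generalizing u with
  | empty => simp
  | @insert a B ha ih =>
    have hplus : ∀ T ∈ B.powerset, (u + ∑ j ∈ insert a B, x j - 2 * ∑ j ∈ T, x j) ^ 4 =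
        (u + x a + ∑ j ∈ B, x j - 2 * ∑ j ∈ T, x j) ^ 4 := fun T _ => by
      rw [sum_insert ha]; ring
    have hminus : ∀ T ∈ B.powerset,
        (u + ∑ j ∈ insert a B, x j - 2 * ∑ j ∈ insert a T, x j) ^ 4 =
          (u - x a + ∑ j ∈ B, x j - 2 * ∑ j ∈ T, x j) ^ 4 := fun T hT => by
      rw [sum_insert ha, sum_insert fun h => ha (mem_powerset.1 hT h)]; ring
    rw [sum_powerset_insert ha, sum_congr rfl hplus, sum_congr rfl hminus, ih, ih,
      card_insert_of_notMem ha, sum_insert ha, sum_insert ha]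
    ring

variable [Fintype ι]

-- A sign pattern is encoded by its set of minus signs.
theorem sum_signPatterns_eq_sum_powerset (x : ι → ℝ) (g : ℝ → ℝ) (A : Finset ι) (m : ι) :
    ∑ ε ∈ univ.filter (fun ε : ι → Bool => (∀ j ∉ A, ε j = true) ∧ ε m = true),
        g (∑ j ∈ A, sgn (ε j) * x j) =
      ∑ T ∈ (A.erase m).powerset, g (∑ j ∈ A, x j - 2 * ∑ j ∈ T, x j) := by
  refine sum_nbij' (fun ε => {j ∈ A | ε j = false}) (fun T j => decide (j ∉ T)) ?_ ?_ ?_ ?_ ?_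
  · intro ε hε
    simp only [mem_filter, mem_univ, true_and] at hε
    refine mem_powerset.2 fun j hj => ?_
    simp only [mem_filter] at hj
    exact mem_erase.2 ⟨fun h => by simp [h, hε.2] at hj, hj.1⟩
  · intro T hT
    have hT := mem_powerset.1 hT
    simp only [mem_filter, mem_univ, true_and, decide_eq_true_eq]
    exact ⟨fun j hj hjT => hj (mem_of_mem_erase (hT hjT)), fun h => by simpa using hT h⟩
  · intro ε hε
    simp only [mem_filter, mem_univ, true_and] at hε
    funext j
    by_cases hj : j ∈ A <;> simp [hj, hε.1]
  · intro T hT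
    have hT := mem_powerset.1 hT
    ext j
    simp only [mem_filter, decide_eq_false_iff_not, not_not]
    exact ⟨And.right, fun h => ⟨mem_of_mem_erase (hT h), h⟩⟩
  · intro ε _
    rw [sum_sgn_mul_eq_sub]

theorem sum_signPatterns_pow_four (x : ι → ℝ) {A : Finset ι} {m : ι} (hm : m ∈ A) :
    ∑ ε ∈ univ.filter (fun ε : ι → Bool => (∀ j ∉ A, ε j = true) ∧ ε m = true),
        (∑ j ∈ A, sgn (ε j) * x j) ^ 4 =
      2 ^ (#A - 1) * (3 * (∑ j ∈ A, x j ^ 2) ^ 2 - 2 * ∑ j ∈ A, x j ^ 4) := by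
  rw [sum_signPatterns_eq_sum_powerset x (· ^ 4) A m, ← add_sum_erase A x hm,
    sum_powerset_pow_four, ← card_erase_of_mem hm, ← add_sum_erase A (x · ^ 2) hm,
    ← add_sum_erase A (x · ^ 4) hm]
  ring

end Signs

theorem forall_mem_forall_le_imp_iff {α : Type*} [LinearOrder α] {A : Finset α}
    (hA : A.Nonempty) {P : α → Prop} :
    (∀ j ∈ A, (∀ i ∈ A, j ≤ i) → P j) ↔ P (A.min' hA) :=
  ⟨fun h => h _ (A.min'_mem hA) fun _ => A.min'_le _,
    fun h j hj hle => le_antisymm (hle _ (A.min'_mem hA)) (A.min'_le j hj) ▸ h⟩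

theorem choose_three_mul_add_three (m : ℕ) :
    (3 * m + 3).choose (m + 1) = 3 * (3 * m + 2).choose m := by
  have h := Nat.add_one_mul_choose_eq (3 * m + 2) m
  apply Nat.eq_of_mul_eq_mul_right m.succ_pos
  linarith

/-- Kürschák's identity: `2^k * C(3k,k) * (∑ xᵢ²)² = ∑ (x_{i₁} ± ⋯ ± x_{i_{k+1}})⁴`,
where the sum is over all `(k+1)`-subsets and all sign patterns in which the
variable with the smallest index carries a plus sign. -/
theorem kurschak_identity (k : ℕ) (hk : 1 ≤ k) (x : Fin (3 * k + 1) → ℝ) :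
    2 ^ k * ((3 * k).choose k : ℝ) * (∑ i, x i ^ 2) ^ 2 =
      ∑ A ∈ Finset.powersetCard (k + 1) (Finset.univ : Finset (Fin (3 * k + 1))),
        ∑ ε ∈ Finset.univ.filter (fun ε : Fin (3 * k + 1) → Bool =>
            (∀ j, j ∉ A → ε j = true) ∧ ∀ j ∈ A, (∀ i ∈ A, j ≤ i) → ε j = true),
          (∑ j ∈ A, sgn (ε j) * x j) ^ 4 := by
  obtain ⟨m, rfl⟩ : ∃ m, k = m + 1 := ⟨k - 1, by omega⟩
  have hinner : ∀ A ∈ powersetCard (m + 1 + 1) (univ : Finset (Fin (3 * (m + 1) + 1))),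
      ∑ ε ∈ univ.filter (fun ε : Fin (3 * (m + 1) + 1) → Bool =>
          (∀ j, j ∉ A → ε j = true) ∧ ∀ j ∈ A, (∀ i ∈ A, j ≤ i) → ε j = true),
        (∑ j ∈ A, sgn (ε j) * x j) ^ 4 =
      2 ^ (m + 1) * (3 * (∑ j ∈ A, x j ^ 2) ^ 2 - 2 * ∑ j ∈ A, x j ^ 4) := by
    intro A hA
    obtain ⟨-, hcard⟩ := mem_powersetCard.1 hA
    have hne : A.Nonempty := card_pos.1 (by omega)
    have h := sum_signPatterns_pow_four x (A.min'_mem hne)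
    rw [hcard, Nat.add_sub_cancel] at h
    simp_rw [forall_mem_forall_le_imp_iff hne]
    -- `convert` reconciles the `Decidable` instance of `∀` over `Fin n` with the generic one.
    convert h
  rw [sum_congr rfl hinner, ← mul_sum, sum_sub_distrib, ← mul_sum, ← mul_sum,
    sum_powersetCard_sq_sum, sum_powersetCard_sum]
  simp only [card_univ, Fintype.card_fin, nsmul_eq_mul]
  rw [show 3 * (m + 1) + 1 - 1 = 3 * m + 3 by omega, show 3 * (m + 1) + 1 - 2 = 3 * m + 2 by omega,
    show (3 * (m + 1)).choose (m + 1) = 3 * (3 * m + 2).choose m from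
      choose_three_mul_add_three m, choose_three_mul_add_three]
  simp only [← pow_mul]
  push_cast
  ring
end

section
/- Let m ≥ 2. There do not exist a finite index set, real coefficients cᵢ (of arbitrary sign), and vectors aᵢ ∈ {−1,0,1}ᵐ such that (x1²+⋯+x_m²)⁴ = ∑ᵢ cᵢ·(aᵢ·x)⁸ as polynomials in x ∈ ℝᵐ. -/
open Finset

/-- `(x₁² + ⋯ + x_m²)⁴` has no representation as a real linear combination of
eighth powers of linear forms with coefficients in `{-1, 0, 1}`. -/
theorem no_representation_eighth_powers (m : ℕ) (hm : 2 ≤ m) :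
    ¬ ∃ (n : ℕ) (c : Fin n → ℝ) (a : Fin n → Fin m → ℝ),
      (∀ i j, a i j = -1 ∨ a i j = 0 ∨ a i j = 1) ∧
      ∀ x : Fin m → ℝ,
        (∑ j, x j ^ 2) ^ 4 = ∑ i, c i * (∑ j, a i j * x j) ^ 8 := by
  rintro ⟨n, c, a, ha, h⟩
  set j0 : Fin m := ⟨0, by omega⟩ with hj0
  set j1 : Fin m := ⟨1, by omega⟩ with hj1
  have hne : j0 ≠ j1 := by simp [hj0, hj1, Fin.ext_iff]
  -- restrict the identity to two variables
  have key : ∀ s t : ℝ,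
      (s ^ 2 + t ^ 2) ^ 4 = ∑ i, c i * (a i j0 * s + a i j1 * t) ^ 8 := by
    intro s t
    have H := h (fun j => if j = j0 then s else if j = j1 then t else 0)
    have lemA : (∑ j, (if j = j0 then s else if j = j1 then t else 0) ^ 2)
        = s ^ 2 + t ^ 2 := by
      have e : ∀ j : Fin m, (if j = j0 then s else if j = j1 then t else 0) ^ 2
          = (if j = j0 then s ^ 2 else 0) + (if j = j1 then t ^ 2 else 0) := by
        intro j
        rcases eq_or_ne j j0 with h0 | h0 <;> rcases eq_or_ne j j1 with h1 | h1
        · exact absurd (h0.symm.trans h1) hne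
        · simp [h0, h1, hne, Ne.symm hne]
        · simp [h0, h1, hne, Ne.symm hne]
        · simp [h0, h1, hne, Ne.symm hne]
      rw [Finset.sum_congr rfl fun j _ => e j, Finset.sum_add_distrib]
      simp [Finset.sum_ite_eq']
    have lemB : ∀ i : Fin n,
        (∑ j, a i j * (if j = j0 then s else if j = j1 then t else 0))
        = a i j0 * s + a i j1 * t := by
      intro i
      have e : ∀ j : Fin m, a i j * (if j = j0 then s else if j = j1 then t else 0)
          = (if j = j0 then a i j * s else 0) + (if j = j1 then a i j * t else 0) := by
        intro j
        rcases eq_or_ne j j0 with h0 | h0 <;> rcases eq_or_ne j j1 with h1 | h1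
        · exact absurd (h0.symm.trans h1) hne
        · simp [h0, h1, hne, Ne.symm hne]
        · simp [h0, h1, hne, Ne.symm hne]
        · simp [h0, h1, hne, Ne.symm hne]
      rw [Finset.sum_congr rfl fun j _ => e j, Finset.sum_add_distrib]
      simp [Finset.sum_ite_eq']
    rw [lemA] at H
    rw [H]
    exact Finset.sum_congr rfl fun i _ => by rw [lemB i]
  -- the linear functional kills every admissible eighth power
  have hz : ∀ i : Fin n,
      (-97840 : ℝ) * (a i j0 * 1 + a i j1 * 0) ^ 8
      + 103785 * (a i j0 * 1 + a i j1 * 1) ^ 8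
      + 175 * (a i j0 * 1 + a i j1 * (-1)) ^ 8
      + (-6352) * (a i j0 * 1 + a i j1 * 2) ^ 8
      + 232 * (a i j0 * 1 + a i j1 * 3) ^ 8 = 0 := by
    intro i
    rcases ha i j0 with h0 | h0 | h0 <;> rcases ha i j1 with h1 | h1 | h1 <;>
      rw [h0, h1] <;> norm_num
  -- but it does not kill the left-hand side
  have hsum : (-97840 : ℝ) * ((1:ℝ) ^ 2 + (0:ℝ) ^ 2) ^ 4
      + 103785 * ((1:ℝ) ^ 2 + (1:ℝ) ^ 2) ^ 4
      + 175 * ((1:ℝ) ^ 2 + (-1:ℝ) ^ 2) ^ 4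
      + (-6352) * ((1:ℝ) ^ 2 + (2:ℝ) ^ 2) ^ 4
      + 232 * ((1:ℝ) ^ 2 + (3:ℝ) ^ 2) ^ 4 = ∑ i : Fin n, c i * 0 := by
    rw [key 1 0, key 1 1, key 1 (-1), key 1 2, key 1 3]
    rw [Finset.mul_sum, Finset.mul_sum, Finset.mul_sum, Finset.mul_sum, Finset.mul_sum,
      ← Finset.sum_add_distrib, ← Finset.sum_add_distrib, ← Finset.sum_add_distrib,
      ← Finset.sum_add_distrib]
    refine Finset.sum_congr rfl fun i _ => ?_
    have hzi := hz i
    calc (-97840 : ℝ) * (c i * (a i j0 * 1 + a i j1 * 0) ^ 8)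
        + 103785 * (c i * (a i j0 * 1 + a i j1 * 1) ^ 8)
        + 175 * (c i * (a i j0 * 1 + a i j1 * (-1)) ^ 8)
        + (-6352) * (c i * (a i j0 * 1 + a i j1 * 2) ^ 8)
        + 232 * (c i * (a i j0 * 1 + a i j1 * 3) ^ 8)
        = c i * ((-97840 : ℝ) * (a i j0 * 1 + a i j1 * 0) ^ 8
          + 103785 * (a i j0 * 1 + a i j1 * 1) ^ 8
          + 175 * (a i j0 * 1 + a i j1 * (-1)) ^ 8
          + (-6352) * (a i j0 * 1 + a i j1 * 2) ^ 8
          + 232 * (a i j0 * 1 + a i j1 * 3) ^ 8) := by ring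
      _ = c i * 0 := by rw [hzi]
  simp only [mul_zero, Finset.sum_const_zero] at hsum
  norm_num at hsum
end

section
/- Suppose X = {x1,…,xn} ⊂ S^{m−1} with positive weights w1,…,wn satisfies ∑ᵢ wᵢ f(xᵢ) = ∫_{S^{m−1}} f dρ for every homogeneous polynomial f of degree q (q even), where ρ is the normalized surface measure. Then with c_q = ∫_{S^{m−1}} y1^q ρ(dy) and rᵢ = (wᵢ/c_q)^{1/q} xᵢ, the identity ⟨x,x⟩^{q/2} = ∑_{i=1}^n ⟨x,rᵢ⟩^q holds for all x ∈ ℝᵐ. -/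
/-!
Pushing `ρ` forward along the reflection exchanging two vectors of equal norm shows that
`∫ ⟪v, y⟫^q dρ(y)` depends only on `‖v‖`, hence equals `c_q ‖v‖^q`. Since `⟪v, ·⟫^q` is a
homogeneous polynomial of degree `q`, the cubature rule turns this into
`∑ᵢ wᵢ ⟪v, xᵢ⟫^q = c_q ‖v‖^q`, and dividing by `c_q` is the Hilbert identity. The constant
`c_q` is positive: otherwise every `xᵢ` would vanish, contradicting the cubature rule for the
polynomial `‖y‖^q`, whose integral over the sphere is `1`.
-/

open Finset MeasureTheory MvPolynomial

open scoped RealInnerProductSpace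

section RotationInvariant

variable {E : Type*} [NormedAddCommGroup E] [InnerProductSpace ℝ E] [MeasurableSpace E]
  [BorelSpace E] {ρ : Measure E}

theorem integral_comp_inner_eq_of_norm_eq (hinv : ∀ g : E ≃ₗᵢ[ℝ] E, ρ.map g = ρ)
    (f : ℝ → ℝ) {u v : E} (huv : ‖u‖ = ‖v‖) :
    ∫ y, f ⟪u, y⟫ ∂ρ = ∫ y, f ⟪v, y⟫ ∂ρ := by
  set g : E ≃ₗᵢ[ℝ] E := Submodule.reflection (ℝ ∙ (u - v))ᗮ
  have hgu : g u = v := Submodule.reflection_sub huv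
  have hemb : MeasurableEmbedding g := g.toHomeomorph.measurableEmbedding
  calc ∫ y, f ⟪u, y⟫ ∂ρ = ∫ y, f ⟪g u, g y⟫ ∂ρ := by simp only [LinearIsometryEquiv.inner_map_map]
    _ = ∫ y, f ⟪v, y⟫ ∂ρ.map g := by rw [hgu, hemb.integral_map]
    _ = ∫ y, f ⟪v, y⟫ ∂ρ := by rw [hinv g]

theorem integral_inner_pow_eq_norm_pow_mul (hinv : ∀ g : E ≃ₗᵢ[ℝ] E, ρ.map g = ρ)
    {e : E} (he : ‖e‖ = 1) (v : E) (q : ℕ) :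
    ∫ y, ⟪v, y⟫ ^ q ∂ρ = ‖v‖ ^ q * ∫ y, ⟪e, y⟫ ^ q ∂ρ := by
  have hnorm : ‖v‖ = ‖‖v‖ • e‖ := by simp [norm_smul, he]
  rw [integral_comp_inner_eq_of_norm_eq hinv (· ^ q) hnorm, ← integral_const_mul]
  simp only [real_inner_smul_left, mul_pow]

end RotationInvariant

theorem eq_zero_of_sum_mul_inner_pow_eq_zero {E ι : Type*} [NormedAddCommGroup E]
    [InnerProductSpace ℝ E] [Fintype ι] {x : ι → E} {w : ι → ℝ} {q : ℕ} (hq : Even q)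
    (hw : ∀ i, 0 < w i) (h : ∀ v, ∑ i, w i * ⟪v, x i⟫ ^ q = 0) (i : ι) : x i = 0 := by
  have hterm : w i * ⟪x i, x i⟫ ^ q = 0 := (sum_eq_zero_iff_of_nonneg fun j _ ↦
    mul_nonneg (hw j).le (hq.pow_nonneg ⟪x i, x j⟫)).1 (h (x i)) i (mem_univ i)
  exact inner_self_eq_zero.1 <|
    eq_zero_of_pow_eq_zero ((mul_eq_zero.1 hterm).resolve_left (hw i).ne')

section Polynomial

variable {ι : Type*} [Fintype ι]

theorem exists_isHomogeneous_eval_eq_inner_pow (v : EuclideanSpace ℝ ι) (q : ℕ) :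
    ∃ f : MvPolynomial ι ℝ, f.IsHomogeneous q ∧ ∀ y : EuclideanSpace ℝ ι,
      eval (fun j ↦ y j) f = ⟪v, y⟫ ^ q := by
  have hlin : (∑ j, C (v j) * X j : MvPolynomial ι ℝ).IsHomogeneous 1 :=
    IsHomogeneous.sum _ _ _ fun j _ ↦ (isHomogeneous_X ℝ j).C_mul (v j)
  refine ⟨_, by simpa using hlin.pow q, fun y ↦ ?_⟩
  simp [PiLp.inner_apply, mul_comm]

theorem exists_isHomogeneous_eval_eq_norm_pow {q : ℕ} (hq : Even q) :
    ∃ f : MvPolynomial ι ℝ, f.IsHomogeneous q ∧ ∀ y : EuclideanSpace ℝ ι,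
      eval (fun j ↦ y j) f = ‖y‖ ^ q := by
  have hsq : (∑ j, X j ^ 2 : MvPolynomial ι ℝ).IsHomogeneous 2 :=
    IsHomogeneous.sum _ _ _ fun j _ ↦ by simpa using (isHomogeneous_X ℝ j).pow 2
  refine ⟨_, by simpa [Nat.two_mul_div_two_of_even hq] using hsq.pow (q / 2), fun y ↦ ?_⟩
  rw [← Nat.two_mul_div_two_of_even hq, pow_mul, EuclideanSpace.norm_sq_eq]
  simp

end Polynomial

theorem sum_mul_eq_integral_of_cubature {ι κ : Type*} [Fintype κ]
    {ρ : Measure (EuclideanSpace ℝ ι)} {q : ℕ} {x : κ → EuclideanSpace ℝ ι} {w : κ → ℝ}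
    (hcub : ∀ f : MvPolynomial ι ℝ, f.IsHomogeneous q →
      ∑ i, w i * eval (fun j ↦ x i j) f = ∫ y, eval (fun j ↦ y j) f ∂ρ)
    {g : EuclideanSpace ℝ ι → ℝ}
    (hg : ∃ f : MvPolynomial ι ℝ, f.IsHomogeneous q ∧ ∀ y, eval (fun j ↦ y j) f = g y) :
    ∑ i, w i * g (x i) = ∫ y, g y ∂ρ := by
  obtain ⟨f, hf, hfg⟩ := hg
  simpa only [hfg] using hcub f hf

theorem cubature_to_hilbert_identity_general (m n q : ℕ) (hm : 0 < m) (hq : Even q)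
    (hq0 : 0 < q)
    (ρ : Measure (EuclideanSpace ℝ (Fin m))) [IsProbabilityMeasure ρ]
    (hsph : ∀ᵐ y ∂ρ, ‖y‖ = 1)
    (hinv : ∀ g : EuclideanSpace ℝ (Fin m) ≃ₗᵢ[ℝ] EuclideanSpace ℝ (Fin m),
      ρ.map g = ρ)
    (x : Fin n → EuclideanSpace ℝ (Fin m))
    (w : Fin n → ℝ) (hw : ∀ i, 0 < w i)
    (hcub : ∀ f : MvPolynomial (Fin m) ℝ, f.IsHomogeneous q →
      ∑ i, w i * MvPolynomial.eval (fun j => x i j) f =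
        ∫ y, MvPolynomial.eval (fun j => y j) f ∂ρ) :
    ∀ z : EuclideanSpace ℝ (Fin m),
      (inner ℝ z z : ℝ) ^ (q / 2) =
        ∑ i, (inner ℝ z
            (((w i / ∫ y, (y ⟨0, hm⟩) ^ q ∂ρ) ^ ((q : ℝ)⁻¹)) • x i) : ℝ) ^ q := by
  intro z
  set c := ∫ y, (y ⟨0, hm⟩) ^ q ∂ρ
  set e : EuclideanSpace ℝ (Fin m) := EuclideanSpace.single ⟨0, hm⟩ 1
  have he : ‖e‖ = 1 := by simp [e]
  have hc : c = ∫ y, ⟪e, y⟫ ^ q ∂ρ := by simp [c, e, EuclideanSpace.inner_single_left]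
  have hsum (v) : ∑ i, w i * ⟪v, x i⟫ ^ q = ‖v‖ ^ q * c := by
    rw [sum_mul_eq_integral_of_cubature hcub (exists_isHomogeneous_eval_eq_inner_pow v q), hc,
      integral_inner_pow_eq_norm_pow_mul hinv he v q]
  have hc_nonneg : 0 ≤ c := integral_nonneg fun y ↦ hq.pow_nonneg _
  have hc_ne : c ≠ 0 := by
    intro hc0
    have hx0 := eq_zero_of_sum_mul_inner_pow_eq_zero hq hw fun v ↦ by rw [hsum, hc0, mul_zero]
    have hnorm := sum_mul_eq_integral_of_cubature hcub (exists_isHomogeneous_eval_eq_norm_pow hq)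
    rw [integral_congr_ae (hsph.mono fun y hy ↦ by rw [hy, one_pow])] at hnorm
    simp [hx0, hq0.ne'] at hnorm
  calc ⟪z, z⟫ ^ (q / 2) = ‖z‖ ^ q := by
        rw [real_inner_self_eq_norm_sq, ← pow_mul, Nat.two_mul_div_two_of_even hq]
    _ = (∑ i, w i * ⟪z, x i⟫ ^ q) / c := by rw [hsum, mul_div_cancel_right₀ _ hc_ne]
    _ = _ := by
      rw [sum_div]
      refine sum_congr rfl fun i _ ↦ ?_
      rw [real_inner_smul_right, mul_pow,
        Real.rpow_inv_natCast_pow (div_nonneg (hw i).le hc_nonneg) hq0.ne']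
      ring

/-- A cubature formula of index `q` on the sphere `S^{m-1}` (with respect to the
normalized rotation-invariant surface measure `ρ`) yields the Hilbert identity
`⟨x,x⟩^{q/2} = ∑ᵢ ⟨x,rᵢ⟩^q`, where `rᵢ = (wᵢ/c_q)^{1/q}·xᵢ` and
`c_q = ∫ y₁^q dρ`. -/
theorem cubature_to_hilbert_identity (m n q : ℕ) (hm : 0 < m) (hq : Even q)
    (hq0 : 0 < q)
    (ρ : Measure (EuclideanSpace ℝ (Fin m))) [IsProbabilityMeasure ρ]
    (hsph : ∀ᵐ y ∂ρ, ‖y‖ = 1)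
    (hinv : ∀ g : EuclideanSpace ℝ (Fin m) ≃ₗᵢ[ℝ] EuclideanSpace ℝ (Fin m),
      ρ.map g = ρ)
    (x : Fin n → EuclideanSpace ℝ (Fin m)) (hx : ∀ i, ‖x i‖ = 1)
    (w : Fin n → ℝ) (hw : ∀ i, 0 < w i)
    (hcub : ∀ f : MvPolynomial (Fin m) ℝ, f.IsHomogeneous q →
      ∑ i, w i * MvPolynomial.eval (fun j => x i j) f =
        ∫ y, MvPolynomial.eval (fun j => y j) f ∂ρ) :
    ∀ z : EuclideanSpace ℝ (Fin m),
      (inner ℝ z z : ℝ) ^ (q / 2) =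
        ∑ i, (inner ℝ z
            (((w i / ∫ y, (y ⟨0, hm⟩) ^ q ∂ρ) ^ ((q : ℝ)⁻¹)) • x i) : ℝ) ^ q :=
  cubature_to_hilbert_identity_general m n q hm hq hq0 ρ hsph hinv x w hw hcub
end

section
/- Let G ≤ O(m) be a finite group and suppose the finite weighted set (X,w) in ℝᵐ is G-invariant (X is a union of orbits z₁^G,…,z_e^G with weight constant on each orbit). If ∑_{x∈X} w(x) f(x) = ∫_Ω f dμ holds for every G-invariant polynomial f of degree ≤ t (with Ω, μ invariant under G ≤ O(m)), then the same equality holds for every polynomial of degree ≤ t. -/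
/-!
Averaging over `G` projects polynomials of degree at most `t` onto `G`-invariant ones of degree at
most `t`, since each `g ∈ G` acts by a linear substitution of the variables. The weighted sum over
the `G`-invariant set `X` and the integral against the `G`-invariant measure `μ` are both unchanged
by replacing a polynomial with its average, so exactness on invariant polynomials gives exactness
on all of them.
-/

open Finset MeasureTheory MvPolynomial
open scoped Matrix

namespace MvPolynomial

variable {R σ τ : Type*} [CommSemiring R]

theorem totalDegree_bind₁_le_of_isHomogeneous {n : ℕ} {φ : σ → MvPolynomial τ R}
    (hφ : ∀ i, (φ i).IsHomogeneous n) (f : MvPolynomial σ R) :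
    (bind₁ φ f).totalDegree ≤ n * f.totalDegree := by
  conv_lhs => rw [← sum_homogeneousComponent f]
  rw [map_sum]
  refine totalDegree_finsetSum_le fun i hi => ?_
  rw [← aeval_eq_bind₁]
  refine ((homogeneousComponent_isHomogeneous i f).aeval φ hφ).totalDegree_le.trans ?_
  exact Nat.mul_le_mul_left n (Nat.lt_succ_iff.mp (Finset.mem_range.mp hi))

variable [Fintype σ]

theorem eval_bind₁_toMvPolynomial (A : Matrix τ σ R) (f : MvPolynomial τ R) (v : σ → R) :
    eval v (bind₁ A.toMvPolynomial f) = eval (A *ᵥ v) f := by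
  rw [← aeval_eq_eval, aeval_bind₁, ← aeval_eq_eval]
  congr
  funext j
  exact A.toMvPolynomial_eval_eq_apply j v

theorem totalDegree_bind₁_toMvPolynomial_le (A : Matrix τ σ R) (f : MvPolynomial τ R) :
    (bind₁ A.toMvPolynomial f).totalDegree ≤ f.totalDegree := by
  simpa using totalDegree_bind₁_le_of_isHomogeneous A.toMvPolynomial_isHomogeneous f

end MvPolynomial

section OrbitAverage

variable {G α : Type*} [Group G] [MulAction G α]

theorem Finset.sum_comp_smul_of_smul_mem {M : Type*} [AddCommMonoid M] {X : Finset α} {g : G}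
    (hX : ∀ x ∈ X, g • x ∈ X) (φ : α → M) : ∑ x ∈ X, φ (g • x) = ∑ x ∈ X, φ x := by
  have hbij : Set.BijOn (g • ·) (X : Set α) X :=
    (X.finite_toSet.injOn_iff_bijOn_of_mapsTo hX).mp (MulAction.injective g).injOn
  exact Finset.sum_nbij (g • ·) hX hbij.injOn hbij.surjOn fun _ _ => rfl

variable [Fintype G]

theorem inv_card_mul_sum_const (c : ℝ) : (Fintype.card G : ℝ)⁻¹ * ∑ _g : G, c = c := by
  rw [Finset.sum_const, Finset.card_univ, nsmul_eq_mul, ← mul_assoc,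
    inv_mul_cancel₀ (Nat.cast_ne_zero.mpr Fintype.card_ne_zero), one_mul]

variable (G) in
noncomputable def orbitAverage (φ : α → ℝ) (y : α) : ℝ :=
  (Fintype.card G : ℝ)⁻¹ * ∑ g : G, φ (g • y)

theorem orbitAverage_smul (φ : α → ℝ) (h : G) (y : α) :
    orbitAverage G φ (h • y) = orbitAverage G φ y := by
  unfold orbitAverage
  congr 1
  exact Fintype.sum_equiv (Equiv.mulRight h) _ _ fun g => congrArg φ (mul_smul g h y).symm

theorem sum_mul_orbitAverage {X : Finset α} {w : α → ℝ} (hX : ∀ g : G, ∀ x ∈ X, g • x ∈ X)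
    (hw : ∀ g : G, ∀ x ∈ X, w (g • x) = w x) (φ : α → ℝ) :
    ∑ x ∈ X, w x * orbitAverage G φ x = ∑ x ∈ X, w x * φ x := by
  have horbit (g : G) : ∑ x ∈ X, w x * φ (g • x) = ∑ x ∈ X, w x * φ x := by
    rw [← Finset.sum_comp_smul_of_smul_mem (hX g) (fun x => w x * φ x)]
    exact Finset.sum_congr rfl fun x hx => by rw [hw g x hx]
  calc ∑ x ∈ X, w x * orbitAverage G φ x
      = (Fintype.card G : ℝ)⁻¹ * ∑ g : G, ∑ x ∈ X, w x * φ (g • x) := by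
        simp only [orbitAverage, Finset.mul_sum, Finset.sum_comm (s := X)]
        exact Finset.sum_congr rfl fun _ _ => Finset.sum_congr rfl fun _ _ => mul_left_comm ..
    _ = ∑ x ∈ X, w x * φ x := by simp only [horbit, inv_card_mul_sum_const]

theorem integral_orbitAverage [MeasurableSpace α] {μ : Measure α}
    (hμ : ∀ g : G, MeasurePreserving (g • ·) μ μ) {φ : α → ℝ} (hφ : Integrable φ μ) :
    ∫ y, orbitAverage G φ y ∂μ = ∫ y, φ y ∂μ := by
  have htranslate (g : G) : ∫ y, φ (g • y) ∂μ = ∫ y, φ y ∂μ := by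
    have hφ' : AEStronglyMeasurable φ (μ.map (g • ·)) := by
      rw [(hμ g).map_eq]
      exact hφ.aestronglyMeasurable
    rw [← integral_map (hμ g).measurable.aemeasurable hφ', (hμ g).map_eq]
  have hintegrable (g : G) : Integrable (fun y => φ (g • y)) μ :=
    (hμ g).integrable_comp_of_integrable hφ
  unfold orbitAverage
  rw [integral_const_mul, integral_finsetSum _ fun g _ => hintegrable g]
  simp only [htranslate, inv_card_mul_sum_const]

end OrbitAverage

section OrthogonalGroup

variable {R E : Type*} [Semiring R] [SeminormedAddCommGroup E] [Module R E]

instance LinearIsometryEquiv.applyMulAction : MulAction (E ≃ₗᵢ[R] E) E where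
  smul g x := g x
  one_smul _ := rfl
  mul_smul _ _ _ := rfl

theorem exists_totalDegree_le_eval_eq_orbitAverage {m : ℕ}
    (G : Subgroup (EuclideanSpace ℝ (Fin m) ≃ₗᵢ[ℝ] EuclideanSpace ℝ (Fin m))) [Fintype G]
    (f : MvPolynomial (Fin m) ℝ) :
    ∃ F : MvPolynomial (Fin m) ℝ, F.totalDegree ≤ f.totalDegree ∧
      ∀ y : EuclideanSpace ℝ (Fin m),
        eval (fun j => y j) F = orbitAverage G (fun z => eval (fun j => z j) f) y := by
  let A (g : G) : Matrix (Fin m) (Fin m) ℝ := LinearMap.toMatrix'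
    ((WithLp.linearEquiv 2 ℝ (Fin m → ℝ)).toLinearMap ∘ₗ
      (g : EuclideanSpace ℝ (Fin m) ≃ₗᵢ[ℝ] EuclideanSpace ℝ (Fin m)).toLinearMap ∘ₗ
      (WithLp.linearEquiv 2 ℝ (Fin m → ℝ)).symm.toLinearMap)
  refine ⟨(Fintype.card G : ℝ)⁻¹ • ∑ g : G, bind₁ (A g).toMvPolynomial f, ?_, fun y => ?_⟩
  · exact (totalDegree_smul_le _ _).trans
      (totalDegree_finsetSum_le fun g _ => totalDegree_bind₁_toMvPolynomial_le (A g) f)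
  · have hA (g : G) : A g *ᵥ (fun j => y j) = fun j => (g • y) j := by
      rw [LinearMap.toMatrix'_mulVec]
      rfl
    simp only [smul_eval, map_sum, eval_bind₁_toMvPolynomial, hA, orbitAverage]

end OrthogonalGroup

/-- The Sobolev theorem: a `G`-invariant weighted finite set which integrates
exactly all `G`-invariant polynomials of degree at most `t` against a
`G`-invariant measure integrates exactly all polynomials of degree at most `t`. -/
theorem sobolev_theorem (m t : ℕ)
    (G : Subgroup (EuclideanSpace ℝ (Fin m) ≃ₗᵢ[ℝ] EuclideanSpace ℝ (Fin m)))
    [Fintype G]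
    (μ : Measure (EuclideanSpace ℝ (Fin m)))
    (hμinv : ∀ g : EuclideanSpace ℝ (Fin m) ≃ₗᵢ[ℝ] EuclideanSpace ℝ (Fin m),
      g ∈ G → μ.map g = μ)
    (hInt : ∀ f : MvPolynomial (Fin m) ℝ, f.totalDegree ≤ t →
      Integrable (fun y : EuclideanSpace ℝ (Fin m) =>
        MvPolynomial.eval (fun j => y j) f) μ)
    (X : Finset (EuclideanSpace ℝ (Fin m))) (w : EuclideanSpace ℝ (Fin m) → ℝ)
    (hXinv : ∀ g ∈ G, ∀ x ∈ X,
      (g : EuclideanSpace ℝ (Fin m) ≃ₗᵢ[ℝ] EuclideanSpace ℝ (Fin m)) x ∈ X)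
    (hwinv : ∀ g ∈ G, ∀ x ∈ X,
      w ((g : EuclideanSpace ℝ (Fin m) ≃ₗᵢ[ℝ] EuclideanSpace ℝ (Fin m)) x) = w x)
    (hGcub : ∀ f : MvPolynomial (Fin m) ℝ, f.totalDegree ≤ t →
      (∀ g ∈ G, ∀ y : EuclideanSpace ℝ (Fin m),
        MvPolynomial.eval (fun j => g y j) f = MvPolynomial.eval (fun j => y j) f) →
      ∑ x ∈ X, w x * MvPolynomial.eval (fun j => x j) f =
        ∫ y, MvPolynomial.eval (fun j => y j) f ∂μ) :
    ∀ f : MvPolynomial (Fin m) ℝ, f.totalDegree ≤ t →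
      ∑ x ∈ X, w x * MvPolynomial.eval (fun j => x j) f =
        ∫ y, MvPolynomial.eval (fun j => y j) f ∂μ := by
  intro f hf
  obtain ⟨F, hFdeg, hF⟩ := exists_totalDegree_le_eval_eq_orbitAverage G f
  have hμ (g : G) : MeasurePreserving (g • ·) μ μ :=
    ⟨(g : EuclideanSpace ℝ (Fin m) ≃ₗᵢ[ℝ] EuclideanSpace ℝ (Fin m)).continuous.measurable, hμinv g g.2⟩
  calc ∑ x ∈ X, w x * eval (fun j => x j) f
      = ∑ x ∈ X, w x * eval (fun j => x j) F := by
        simp only [hF]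
        exact (sum_mul_orbitAverage (fun (g : G) => hXinv g g.2) (fun (g : G) => hwinv g g.2) _).symm
    _ = ∫ y, eval (fun j => y j) F ∂μ :=
        hGcub F (hFdeg.trans hf) fun g hg y => by
          simp only [hF]
          exact orbitAverage_smul _ (⟨g, hg⟩ : G) y
    _ = ∫ y, eval (fun j => y j) f ∂μ := by
        simp only [hF]
        exact integral_orbitAverage hμ (hInt f hf)
end
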